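/- Let ℏ be a nonzero complex number and let V be a finite-dimensional indecomposable A-module containing a submodule W such that both W and the quotient V/W are isomorphic to V^ℏ(1). Then V is isomorphic to V^ℏ(2). (The module V^ℏ(2) realizes the only way to glue two copies of V^ℏ.) -/

import Mathlib

/-!
`E = XY + YX` commutes with `X` and `Y` (because `X² = Y² = 0`) and acts by `ℏ` on `W` and on
`V/W`, so `N = E - ℏ` maps `V` into `W` and kills `W`; in particular `N² = 0`.

If `N = 0`, then `E` is the nonzero scalar `ℏ` and every submodule has an invariant complement:
complement `W ⊓ ker X` inside `ker X` by `C`, then `C ⊔ Y C` works. This contradicts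
indecomposability, since `W` is neither `0` nor `V`.

If `N ≠ 0`, then `E = ℏ + N` is invertible, and `N = N E E⁻¹ = (N X Y + Y N X) E⁻¹` forces
`N X ≠ 0`. So some `x ∈ ker X` has `N x ≠ 0`, and sending the standard basis of `V^ℏ(2)` to
`N x, x, Y N x, Y x` is an injective module map, hence an isomorphism as `dim V = 4`.
-/

/-- A subspace invariant under the two operators `X`, `Y` (i.e. a submodule for
the module structure they define). -/
def AInvariant {V : Type} [AddCommGroup V] [Module ℂ V] (X Y : Module.End ℂ V)
    (p : Submodule ℂ V) : Prop :=
  ∀ v ∈ p, X v ∈ p ∧ Y v ∈ p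

/-- A module (given by a vector space with two operators `X`, `Y`) is
indecomposable if it is nonzero and is not the internal direct sum of two
nonzero invariant subspaces. -/
def AIndecomposable {V : Type} [AddCommGroup V] [Module ℂ V]
    (X Y : Module.End ℂ V) : Prop :=
  (∃ v : V, v ≠ 0) ∧ ∀ p q : Submodule ℂ V, AInvariant X Y p → AInvariant X Y q →
    IsCompl p q → p = ⊥ ∨ q = ⊥

/-- An isomorphism of modules given by pairs of endomorphisms: a linear
equivalence intertwining the respective actions. -/
def AModIso {V W : Type} [AddCommGroup V] [Module ℂ V] [AddCommGroup W] [Module ℂ W]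
    (X Y : Module.End ℂ V) (X' Y' : Module.End ℂ W) : Prop :=
  ∃ e : V ≃ₗ[ℂ] W, (∀ v, e (X v) = X' (e v)) ∧ (∀ v, e (Y v) = Y' (e v))

/-- The `n × n` Jordan block `J_n(ℏ)` with eigenvalue `ℏ`. -/
def jordan (n : ℕ) (ℏ : ℂ) : Matrix (Fin n) (Fin n) ℂ :=
  Matrix.of fun i j : Fin n =>
    if i = j then ℏ else if (j : ℕ) = (i : ℕ) + 1 then 1 else 0

/-- The action of `X` on the module `V^ℏ(n) = ℂⁿ ⊕ ℂⁿ`: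
`X(u,v) = (J_n(ℏ)v, 0)`. -/
noncomputable def VhX (n : ℕ) (ℏ : ℂ) : Module.End ℂ ((Fin n → ℂ) × (Fin n → ℂ)) :=
  LinearMap.prod
    ((Matrix.toLin' (jordan n ℏ)).comp (LinearMap.snd ℂ (Fin n → ℂ) (Fin n → ℂ)))
    (0 : ((Fin n → ℂ) × (Fin n → ℂ)) →ₗ[ℂ] (Fin n → ℂ))

/-- The action of `Y` on the module `V^ℏ(n) = ℂⁿ ⊕ ℂⁿ`: `Y(u,v) = (0, u)`. -/
noncomputable def VhY (n : ℕ) : Module.End ℂ ((Fin n → ℂ) × (Fin n → ℂ)) :=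
  LinearMap.prod (0 : ((Fin n → ℂ) × (Fin n → ℂ)) →ₗ[ℂ] (Fin n → ℂ))
    (LinearMap.fst ℂ (Fin n → ℂ) (Fin n → ℂ))

open Matrix

section Ring

variable {R : Type*} [Ring R] {x y : R}

theorem commute_mul_add_mul_left_of_mul_self_eq_zero (hx : x * x = 0) (y : R) :
    Commute x (x * y + y * x) := by
  simp only [Commute, SemiconjBy, mul_add, add_mul, ← mul_assoc, hx, zero_mul]
  simp only [mul_assoc, hx, mul_zero, zero_add, add_zero]

theorem commute_mul_add_mul_right_of_mul_self_eq_zero (hy : y * y = 0) (x : R) :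
    Commute y (x * y + y * x) :=
  add_comm (y * x) (x * y) ▸ commute_mul_add_mul_left_of_mul_self_eq_zero hy x

theorem eq_zero_of_mul_eq_zero_of_isUnit_mul_add_mul {n : R} (he : IsUnit (x * y + y * x))
    (hny : Commute n y) (hnx : n * x = 0) : n = 0 := by
  refine he.mul_left_eq_zero.mp ?_
  rw [mul_add, ← mul_assoc, ← mul_assoc, hnx, hny.eq, mul_assoc, hnx, zero_mul, mul_zero,
    add_zero]

end Ring

section AModIso

variable {V W : Type} [AddCommGroup V] [Module ℂ V] [AddCommGroup W] [Module ℂ W]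
  {X Y : Module.End ℂ V} {X' Y' : Module.End ℂ W}

theorem AModIso.symm (h : AModIso X Y X' Y') : AModIso X' Y' X Y := by
  obtain ⟨e, hX, hY⟩ := h
  refine ⟨e.symm, fun w => e.injective ?_, fun w => e.injective ?_⟩ <;> simp [hX, hY]

theorem AModIso.finrank_eq (h : AModIso X Y X' Y') : Module.finrank ℂ V = Module.finrank ℂ W :=
  h.choose.finrank_eq

theorem AModIso.mul_add_mul_eq_smul_one (h : AModIso X Y X' Y') {c : ℂ}
    (h' : X' * Y' + Y' * X' = c • 1) : X * Y + Y * X = c • 1 := by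
  obtain ⟨e, hX, hY⟩ := h
  ext v
  apply e.injective
  simpa [hX, hY] using LinearMap.congr_fun h' (e v)

end AModIso

@[simp]
theorem VhX_apply (n : ℕ) (ℏ : ℂ) (p : (Fin n → ℂ) × (Fin n → ℂ)) :
    VhX n ℏ p = (jordan n ℏ *ᵥ p.2, 0) := by
  simp [VhX, toLin'_apply]

@[simp]
theorem VhY_apply (n : ℕ) (p : (Fin n → ℂ) × (Fin n → ℂ)) : VhY n p = (0, p.1) := rfl

theorem jordan_one (ℏ : ℂ) : jordan 1 ℏ = ℏ • 1 := by
  ext i j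
  simp [jordan, Subsingleton.elim i j]

theorem jordan_two_mulVec (ℏ : ℂ) (v : Fin 2 → ℂ) :
    jordan 2 ℏ *ᵥ v = ![ℏ * v 0 + v 1, ℏ * v 1] := by
  ext i
  fin_cases i <;> simp [jordan, mulVec, dotProduct, Fin.sum_univ_two]

theorem VhX_mul_VhY_add_VhY_mul_VhX_one (ℏ : ℂ) :
    VhX 1 ℏ * VhY 1 + VhY 1 * VhX 1 ℏ = ℏ • 1 := by
  refine LinearMap.ext fun p => ?_
  simp [jordan_one, add_comm, smul_mulVec]
  rfl

section Semisimple

variable {V : Type} [AddCommGroup V] [Module ℂ V] {X Y : Module.End ℂ V} {c : ℂ}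

theorem apply_apply_eq_smul_of_apply_eq_zero (hE : X * Y + Y * X = c • 1) {v : V}
    (hv : X v = 0) : X (Y v) = c • v := by
  simpa [hv] using LinearMap.congr_fun hE v

theorem exists_isCompl_aInvariant_of_mul_add_mul_eq_smul_one (hX : X * X = 0) (hY : Y * Y = 0)
    (hc : c ≠ 0) (hE : X * Y + Y * X = c • 1) {W : Submodule ℂ V} (hW : AInvariant X Y W) :
    ∃ U, AInvariant X Y U ∧ IsCompl W U := by
  set K := LinearMap.ker X
  obtain ⟨C', hC'⟩ := Submodule.exists_isCompl (W ⊓ K)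
  set C := C' ⊓ K
  have hXC : ∀ v ∈ C, X v = 0 := fun v hv => hv.2
  have hWC : ∀ v ∈ W, v ∈ C → v = 0 := fun v hvW hvC =>
    (Submodule.disjoint_def.mp hC'.disjoint) v ⟨hvW, hvC.2⟩ hvC.1
  have hK : W ⊓ K ⊔ C = K := by
    rw [← sup_inf_assoc_of_le _ inf_le_right, hC'.sup_eq_top, top_inf_eq]
  refine ⟨C ⊔ C.map Y, fun v hv => ?_, ?_, ?_⟩
  · obtain ⟨a, ha, _, ⟨b, hb, rfl⟩, rfl⟩ := Submodule.mem_sup.mp hv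
    have hYY : Y (Y b) = 0 := LinearMap.congr_fun hY b
    rw [map_add, map_add, hXC a ha, apply_apply_eq_smul_of_apply_eq_zero hE (hXC b hb), hYY,
      zero_add, add_zero]
    exact ⟨Submodule.mem_sup_left (C.smul_mem c hb),
      Submodule.mem_sup_right (Submodule.mem_map_of_mem ha)⟩
  · refine Submodule.disjoint_def.mpr fun v hvW hv => ?_
    obtain ⟨a, ha, _, ⟨b, hb, rfl⟩, rfl⟩ := Submodule.mem_sup.mp hv
    have hXv : X (a + Y b) = c • b := by
      rw [map_add, hXC a ha, apply_apply_eq_smul_of_apply_eq_zero hE (hXC b hb), zero_add]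
    have hb0 : b = 0 := by
      have := hWC _ (hXv ▸ (hW _ hvW).1) (C.smul_mem c hb)
      exact (smul_eq_zero.mp this).resolve_left hc
    rw [hb0, map_zero, add_zero] at hvW ⊢
    exact hWC a hvW ha
  · have hXX : ∀ v, X (X v) = 0 := LinearMap.congr_fun hX
    have hKle : K ≤ W ⊔ (C ⊔ C.map Y) := hK ▸ sup_le_sup inf_le_left le_sup_left
    have hYKle : K.map Y ≤ W ⊔ (C ⊔ C.map Y) := by
      rw [← hK, Submodule.map_sup]
      refine sup_le_sup ?_ le_sup_right
      rintro _ ⟨v, hv, rfl⟩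
      exact (hW v hv.1).2
    refine codisjoint_iff_le_sup.mpr fun v _ => ?_
    have hv : v = c⁻¹ • X (Y v) + Y (c⁻¹ • X v) := by
      rw [map_smul, ← smul_add, ← Module.End.mul_apply, ← Module.End.mul_apply,
        ← LinearMap.add_apply, hE, LinearMap.smul_apply, Module.End.one_apply, smul_smul,
        inv_mul_cancel₀ hc, one_smul]
    rw [hv]
    exact add_mem (hKle (K.smul_mem _ (hXX _)))
      (hYKle (Submodule.mem_map_of_mem (K.smul_mem _ (hXX _))))

end Semisimple

theorem AIndecomposable.eq_bot_or_eq_top_of_mul_add_mul_eq_smul_one {V : Type} [AddCommGroup V]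
    [Module ℂ V] {X Y : Module.End ℂ V} (hind : AIndecomposable X Y) (hX : X * X = 0)
    (hY : Y * Y = 0) {c : ℂ} (hc : c ≠ 0) (hE : X * Y + Y * X = c • 1) {W : Submodule ℂ V}
    (hW : AInvariant X Y W) : W = ⊥ ∨ W = ⊤ := by
  obtain ⟨U, hU, hWU⟩ := exists_isCompl_aInvariant_of_mul_add_mul_eq_smul_one hX hY hc hE hW
  exact (hind.2 W U hW hU hWU).imp_right fun h => by simpa [h] using hWU.sup_eq_top

section Gluing

variable {V : Type} [AddCommGroup V] [Module ℂ V] {X Y : Module.End ℂ V} {ℏ : ℂ} {n x : V}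

noncomputable def glueHom (Y : Module.End ℂ V) (n x : V) :
    (Fin 2 → ℂ) × (Fin 2 → ℂ) →ₗ[ℂ] V :=
  (Fintype.linearCombination ℂ ![n, x]).coprod (Y ∘ₗ Fintype.linearCombination ℂ ![n, x])

theorem glueHom_apply (p : (Fin 2 → ℂ) × (Fin 2 → ℂ)) :
    glueHom Y n x p = p.1 0 • n + p.1 1 • x + Y (p.2 0 • n + p.2 1 • x) := by
  simp [glueHom, Fintype.linearCombination_apply, Fin.sum_univ_two]

theorem glueHom_VhX (hXn : X n = 0) (hXx : X x = 0) (hXYn : X (Y n) = ℏ • n)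
    (hXYx : X (Y x) = ℏ • x + n) (p : (Fin 2 → ℂ) × (Fin 2 → ℂ)) :
    glueHom Y n x (VhX 2 ℏ p) = X (glueHom Y n x p) := by
  simp only [glueHom_apply, VhX_apply, jordan_two_mulVec, cons_val_zero, cons_val_one,
    Pi.zero_apply, zero_smul, smul_zero, add_zero, map_add, map_smul, map_zero, hXn, hXx, hXYn,
    hXYx]
  module

theorem glueHom_VhY (hY : Y * Y = 0) (p : (Fin 2 → ℂ) × (Fin 2 → ℂ)) :
    glueHom Y n x (VhY 2 p) = Y (glueHom Y n x p) := by
  have hYY : ∀ v, Y (Y v) = 0 := LinearMap.congr_fun hY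
  simp [glueHom_apply, hYY]

theorem glueHom_injective (hℏ : ℏ ≠ 0) (hnx : LinearIndependent ℂ ![n, x]) (hXn : X n = 0)
    (hXx : X x = 0) (hXYn : X (Y n) = ℏ • n) (hXYx : X (Y x) = ℏ • x + n) :
    Function.Injective (glueHom Y n x) := by
  rw [injective_iff_map_eq_zero]
  rintro ⟨u, v⟩ hp
  have hXp := glueHom_VhX hXn hXx hXYn hXYx (u, v)
  rw [hp, map_zero, glueHom_apply, VhX_apply, jordan_two_mulVec] at hXp
  have hv : v 0 = 0 ∧ v 1 = 0 := by
    obtain ⟨h0, h1⟩ := LinearIndependent.pair_iff.mp hnx (ℏ * v 0 + v 1) (ℏ * v 1)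
      (by simpa using hXp)
    have h1' : v 1 = 0 := (mul_eq_zero.mp h1).resolve_left hℏ
    exact ⟨(mul_eq_zero.mp (by simpa [h1'] using h0)).resolve_left hℏ, h1'⟩
  simp only [glueHom_apply, hv.1, hv.2, zero_smul, add_zero, map_zero] at hp
  obtain ⟨hu0, hu1⟩ := LinearIndependent.pair_iff.mp hnx (u 0) (u 1) (by simpa using hp)
  ext i <;> fin_cases i <;> simp [hu0, hu1, hv.1, hv.2]

theorem aModIso_VhX_two_of_apply_eq_zero [FiniteDimensional ℂ V] (hℏ : ℏ ≠ 0) (hY : Y * Y = 0)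
    (hdim : Module.finrank ℂ V = 4) {N : Module.End ℂ V} (hE : X * Y + Y * X = ℏ • 1 + N)
    (hNX : Commute N X) (hNN : N * N = 0) (hXx : X x = 0) (hNx : N x ≠ 0) :
    AModIso X Y (VhX 2 ℏ) (VhY 2) := by
  have hXY : ∀ v, X v = 0 → X (Y v) = ℏ • v + N v := fun v hv => by
    simpa [hv] using LinearMap.congr_fun hE v
  have hNNx : N (N x) = 0 := LinearMap.congr_fun hNN x
  have hXNx : X (N x) = 0 := by
    rw [← Module.End.mul_apply, ← hNX.eq, Module.End.mul_apply, hXx, map_zero]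
  have hindep : LinearIndependent ℂ ![N x, x] := by
    refine LinearIndependent.pair_iff.mpr fun s t hst => ?_
    have ht : t = 0 := by
      simpa [hNNx, hNx] using congrArg N hst
    subst ht
    exact ⟨by simpa [hNx] using hst, rfl⟩
  have hXYNx : X (Y (N x)) = ℏ • N x := by rw [hXY _ hXNx, hNNx, add_zero]
  have hXYx : X (Y x) = ℏ • x + N x := hXY x hXx
  have hinj := glueHom_injective hℏ hindep hXNx hXx hXYNx hXYx
  have hdim' : Module.finrank ℂ ((Fin 2 → ℂ) × (Fin 2 → ℂ)) = Module.finrank ℂ V := by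
    simp [hdim]
  exact AModIso.symm ⟨(glueHom Y (N x) x).linearEquivOfInjective hinj hdim',
    glueHom_VhX hXNx hXx hXYNx hXYx, glueHom_VhY hY⟩

theorem aModIso_VhX_two_of_ne_zero [FiniteDimensional ℂ V] (hℏ : ℏ ≠ 0) (hX : X * X = 0)
    (hY : Y * Y = 0) (hdim : Module.finrank ℂ V = 4) {N : Module.End ℂ V}
    (hE : X * Y + Y * X = ℏ • 1 + N) (hNN : N * N = 0) (hN : N ≠ 0) :
    AModIso X Y (VhX 2 ℏ) (VhY 2) := by
  have hN' : N = X * Y + Y * X - ℏ • 1 := by rw [hE, add_sub_cancel_left]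
  have hNX : Commute N X := hN' ▸
    (commute_mul_add_mul_left_of_mul_self_eq_zero hX Y).symm.sub_left
      ((Commute.one_left X).smul_left ℏ)
  have hNY : Commute N Y := hN' ▸
    (commute_mul_add_mul_right_of_mul_self_eq_zero hY X).symm.sub_left
      ((Commute.one_left Y).smul_left ℏ)
  have hEunit : IsUnit (X * Y + Y * X) := hE ▸
    IsNilpotent.isUnit_add_left_of_commute ⟨2, by rw [pow_two, hNN]⟩
      (isUnit_one.smul (Units.mk0 ℏ hℏ)) ((Commute.one_right N).smul_right ℏ)
  obtain ⟨v, hv⟩ : ∃ v, N (X v) ≠ 0 := by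
    by_contra! h
    exact hN (eq_zero_of_mul_eq_zero_of_isUnit_mul_add_mul hEunit hNY (LinearMap.ext h))
  exact aModIso_VhX_two_of_apply_eq_zero hℏ hY hdim hE hNX hNN (LinearMap.congr_fun hX v) hv

end Gluing

theorem mul_add_mul_sub_smul_one_mul_self_eq_zero {V : Type} [AddCommGroup V] [Module ℂ V]
    {X Y : Module.End ℂ V} {W : Submodule ℂ V} (hWX : ∀ v ∈ W, X v ∈ W)
    (hWY : ∀ v ∈ W, Y v ∈ W) {c : ℂ}
    (hW : X.restrict hWX * Y.restrict hWY + Y.restrict hWY * X.restrict hWX = c • 1)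
    (hQ : W.mapQ W X hWX * W.mapQ W Y hWY + W.mapQ W Y hWY * W.mapQ W X hWX = c • 1) :
    (X * Y + Y * X - c • 1) * (X * Y + Y * X - c • 1) = 0 := by
  ext v
  have hv : (X * Y + Y * X - c • 1) v ∈ W := by
    rw [← Submodule.Quotient.mk_eq_zero]
    simpa [sub_eq_zero] using LinearMap.congr_fun hQ (Submodule.Quotient.mk v)
  simpa [sub_eq_zero] using congrArg Subtype.val (LinearMap.congr_fun hW ⟨_, hv⟩)

/-- The module `V^ℏ(2)` realizes the only way to glue two copies of `V^ℏ`: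
if `ℏ ≠ 0` and a finite-dimensional indecomposable `A`-module `V` has a
submodule `W ≅ V^ℏ(1)` with quotient `V/W ≅ V^ℏ(1)`, then `V ≅ V^ℏ(2)`. -/
theorem glue_two_copies (ℏ : ℂ) (hℏ : ℏ ≠ 0)
    (V : Type) [AddCommGroup V] [Module ℂ V] [FiniteDimensional ℂ V]
    (X Y : Module.End ℂ V) (hX : X * X = 0) (hY : Y * Y = 0)
    (hind : AIndecomposable X Y)
    (W : Submodule ℂ V) (hWX : ∀ v ∈ W, X v ∈ W) (hWY : ∀ v ∈ W, Y v ∈ W)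
    (hWiso : AModIso (X.restrict hWX) (Y.restrict hWY) (VhX 1 ℏ) (VhY 1))
    (hQiso : AModIso (Submodule.mapQ W W X fun v hv => hWX v hv)
      (Submodule.mapQ W W Y fun v hv => hWY v hv) (VhX 1 ℏ) (VhY 1)) :
    AModIso X Y (VhX 2 ℏ) (VhY 2) := by
  have hE₁ := VhX_mul_VhY_add_VhY_mul_VhX_one ℏ
  have hNN := mul_add_mul_sub_smul_one_mul_self_eq_zero hWX hWY
    (hWiso.mul_add_mul_eq_smul_one hE₁) (hQiso.mul_add_mul_eq_smul_one hE₁)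
  have hdimW : Module.finrank ℂ W = 2 := by simp [hWiso.finrank_eq]
  have hdimV : Module.finrank ℂ V = 4 := by
    rw [← W.finrank_quotient_add_finrank, hQiso.finrank_eq, hdimW]
    simp
  by_cases hN : X * Y + Y * X - ℏ • 1 = 0
  · exfalso
    rcases hind.eq_bot_or_eq_top_of_mul_add_mul_eq_smul_one hX hY hℏ (sub_eq_zero.mp hN)
      (W := W) fun v hv => ⟨hWX v hv, hWY v hv⟩ with h | h
    · rw [h, finrank_bot] at hdimW
      omega
    · rw [h, finrank_top] at hdimW
      omega
  · exact aModIso_VhX_two_of_ne_zero hℏ hX hY hdimV (add_sub_cancel _ _).symm hNN hN
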